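/- Let G be a finitely generated group whose word problem WP(G) is not recursively enumerable (i.e. G is not recursively presented). Then there exists a finite alphabet A and a (G×ℤ)-effectively closed subshift X ⊆ A^{G×ℤ} such that its ℤ-projective subdynamics π_ℤ(X) ⊆ A^ℤ is not an effectively closed ℤ-subshift. -/

import Mathlib

open scoped Classical

noncomputable section

namespace SDG

/-! ### Relativized computability -/

/-- Partial recursive functions `ℕ →. ℕ` relative to an oracle `O`. -/
inductive NatPartrecIn (O : ℕ →. ℕ) : (ℕ →. ℕ) → Prop
  | oracle : NatPartrecIn O O
  | zero : NatPartrecIn O (pure 0)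
  | succ : NatPartrecIn O Nat.succ
  | left : NatPartrecIn O ↑fun n : ℕ => n.unpair.1
  | right : NatPartrecIn O ↑fun n : ℕ => n.unpair.2
  | pair {f g} : NatPartrecIn O f → NatPartrecIn O g →
      NatPartrecIn O fun n => Nat.pair <$> f n <*> g n
  | comp {f g} : NatPartrecIn O f → NatPartrecIn O g →
      NatPartrecIn O fun n => g n >>= f
  | prec {f g} : NatPartrecIn O f → NatPartrecIn O g →
      NatPartrecIn O (Nat.unpaired fun a n =>
        n.rec (f a) fun y IH => do let i ← IH; g (Nat.pair a (Nat.pair y i)))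
  | rfind {f} : NatPartrecIn O f →
      NatPartrecIn O fun a => Nat.rfind fun n => (fun m => m = 0) <$> f (Nat.pair a n)

/-- A partial function between `Primcodable` types is partial recursive in the oracle `O`. -/
def PartrecIn (O : ℕ →. ℕ) {α σ : Type} [Primcodable α] [Primcodable σ] (f : α →. σ) : Prop :=
  NatPartrecIn O fun n =>
    Part.bind (Part.ofOption (Encodable.decode (α := α) n)) fun a => (f a).map Encodable.encode

/-- A predicate is recursively enumerable in the oracle `O` if it is the domain of a partial
function recursive in `O`. -/
def RePredIn (O : ℕ →. ℕ) {α : Type} [Primcodable α] (p : α → Prop) : Prop :=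
  PartrecIn O fun a => Part.assert (p a) fun _ => Part.some ()

/-- The characteristic function (as an oracle `ℕ →. ℕ`) of a set `L` of elements of a
`Primcodable` type: on the code of an element of `L` it answers `1`, elsewhere `0`. -/
def charFun {α : Type} [Primcodable α] (L : Set α) : ℕ →. ℕ :=
  fun n => Part.some (if ∃ a ∈ L, Encodable.encode a = n then 1 else 0)

/-! ### Finitely generated groups, words and pattern codings -/

variable {G : Type} [Group G]

/-- The group element represented by a word over the generators `S`. -/
def wordEval {k : ℕ} (S : Fin k → G) (w : List (Fin k)) : G :=
  (w.map S).prod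

/-- `S : Fin k → G` is a finite symmetric generating family containing the identity. -/
def IsGenData {k : ℕ} (S : Fin k → G) : Prop :=
  (∃ i, S i = 1) ∧ (∀ i, ∃ j, S j = (S i)⁻¹) ∧ Subgroup.closure (Set.range S) = ⊤

/-- The word problem of `G` with respect to the generating family `S`. -/
def WP {k : ℕ} (S : Fin k → G) : Set (List (Fin k)) :=
  {w | wordEval S w = 1}

/-- A pattern coding over the alphabet `A`: a finite list of pairs (word, symbol). -/
abbrev PatternCoding (k : ℕ) (A : Type) : Type :=
  List (List (Fin k) × A)

/-- The subshift defined by a set `C` of pattern codings: configurations in which no translate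
of a coded pattern occurs. -/
def XC {k : ℕ} (S : Fin k → G) {A : Type} (C : Set (PatternCoding k A)) : Set (G → A) :=
  {x | ¬ ∃ (g : G) (c : PatternCoding k A), c ∈ C ∧ ∀ p ∈ c, x (g * wordEval S p.1) = p.2}

/-- A set is effectively closed if it is defined by a recursively enumerable set of
pattern codings. -/
def EffectivelyClosed {k : ℕ} (S : Fin k → G) {A : Type} [Primcodable A]
    (X : Set (G → A)) : Prop :=
  ∃ C : Set (PatternCoding k A), REPred (· ∈ C) ∧ X = XC S C

/-- A set is `G`-effectively closed if it is defined by a set of pattern codings which is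
recursively enumerable with oracle the word problem of `G`. -/
def GEffectivelyClosed {k : ℕ} (S : Fin k → G) {A : Type} [Primcodable A]
    (X : Set (G → A)) : Prop :=
  ∃ C : Set (PatternCoding k A), RePredIn (charFun (WP S)) (· ∈ C) ∧ X = XC S C

/-- A pattern coding is consistent if words representing the same group element receive the
same symbol. -/
def Consistent {k : ℕ} (S : Fin k → G) {A : Type} (c : PatternCoding k A) : Prop :=
  ∀ p ∈ c, ∀ q ∈ c, wordEval S p.1 = wordEval S q.1 → p.2 = q.2

/-! ### Subshifts, SFTs, sofic subshifts -/

/-- `X ⊆ A^G` is a subshift: closed (for the product of the discrete topology) and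
shift-invariant. -/
def IsSubshift {A : Type} (X : Set (G → A)) : Prop :=
  (letI : TopologicalSpace A := ⊥; IsClosed X) ∧
    ∀ x ∈ X, ∀ g : G, (fun h => x (g⁻¹ * h)) ∈ X

/-- A pattern with finite support over the alphabet `A`. -/
structure Pattern (G : Type) (A : Type) where
  supp : Finset G
  val : (g : G) → g ∈ supp → A

/-- The pattern `p` occurs in the configuration `x` at position `g`. -/
def PatternOccurs {A : Type} (p : Pattern G A) (x : G → A) (g : G) : Prop :=
  ∀ (h : G) (hh : h ∈ p.supp), x (g * h) = p.val h hh

/-- The subshift defined by a set of forbidden patterns. -/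
def XPat {A : Type} (Fs : Set (Pattern G A)) : Set (G → A) :=
  {x | ¬ ∃ (g : G) (p : Pattern G A), p ∈ Fs ∧ PatternOccurs p x g}

/-- A subshift of finite type: defined by a finite set of forbidden patterns. -/
def IsSFT {A : Type} (X : Set (G → A)) : Prop :=
  ∃ Fs : Set (Pattern G A), Fs.Finite ∧ X = XPat Fs

/-- A witness that `X` is sofic: an SFT `Y` over a finite alphabet `B` together with a factor
code (continuous shift-equivariant surjection) from `Y` onto `X`. -/
structure SoficVia (G : Type) [Group G] {A : Type} (X : Set (G → A)) : Type 1 where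
  B : Type
  finB : Fintype B
  Y : Set (G → B)
  sft : IsSFT Y
  subY : IsSubshift Y
  phi : (G → B) → (G → A)
  cont : letI : TopologicalSpace B := ⊥
         letI : TopologicalSpace A := ⊥
         ContinuousOn phi Y
  equiv : ∀ y ∈ Y, ∀ g : G, phi (fun h => y (g⁻¹ * h)) = fun h => phi y (g⁻¹ * h)
  image : phi '' Y = X

/-- A subshift is sofic if it is the image of an SFT under a factor code. -/
def IsSofic {A : Type} (X : Set (G → A)) : Prop :=
  Nonempty (SoficVia G X)

/-- A factor code from `X` onto `Y`: continuous (discrete product topologies),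
shift-equivariant and surjective. -/
def FactorCode {A B : Type} (X : Set (G → A)) (Y : Set (G → B))
    (φ : (G → A) → (G → B)) : Prop :=
  (letI : TopologicalSpace A := ⊥
   letI : TopologicalSpace B := ⊥
   ContinuousOn φ X) ∧
  (∀ x ∈ X, ∀ g : G, φ (fun h => x (g⁻¹ * h)) = fun h => φ x (g⁻¹ * h)) ∧
  φ '' X = Y

/-- Two subshifts are conjugate if there is a shift-equivariant homeomorphism between them. -/
def Conjugate {A B : Type} (X : Set (G → A)) (Y : Set (G → B)) : Prop :=
  ∃ (φ : (G → A) → (G → B)) (ψ : (G → B) → (G → A)),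
    FactorCode X Y φ ∧ FactorCode Y X ψ ∧
    (∀ x ∈ X, ψ (φ x) = x) ∧ (∀ y ∈ Y, φ (ψ y) = y)

/-- The one-or-less subshift: configurations with at most one occurrence of the symbol `1`
(represented by `true`). -/
def Xle1 (G : Type) : Set (G → Bool) :=
  {x | ∀ g h : G, x g = true → x h = true → g = h}

/-! ### `G`-machines -/

/-- A `G`-machine: finite set of states, finite tape alphabet `A` with a blank symbol, initial
state, accepting states, and a transition function moving with the generators `Fin k`. -/
structure GMachine (k : ℕ) (A : Type) : Type 1 where
  Q : Type
  finQ : Fintype Q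
  blank : A
  q0 : Q
  QF : Set Q
  delta : A × Q → A × Q × Fin k

/-- One step of a `G`-machine in the fixed head model: if `δ(x(1),q) = (a,q',s)` then the new
configuration is `σ_{s⁻¹} x̃` where `x̃` is `x` with the value at `1` replaced by `a`. -/
def GMachine.step {k : ℕ} {A : Type} (M : GMachine k A) (S : Fin k → G) :
    (G → A) × M.Q → (G → A) × M.Q :=
  fun xq =>
    let t := M.delta (xq.1 1, xq.2)
    let xt : G → A := Function.update xq.1 1 t.1
    (fun h => xt (S t.2.2 * h), t.2.1)

/-- The configuration which equals the pattern `p` on its support and `blank` elsewhere. -/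
def Pattern.config {A : Type} (p : Pattern G A) (blank : A) : G → A :=
  fun g => if h : g ∈ p.supp then p.val g h else blank

/-- The `G`-machine `M` accepts the pattern `p` if starting from the configuration `x^p` in the
initial state it eventually reaches an accepting state. -/
def GMachine.Accepts {k : ℕ} {A : Type} (M : GMachine k A) (S : Fin k → G)
    (p : Pattern G A) : Prop :=
  ∃ n : ℕ, ((M.step S)^[n] (p.config M.blank, M.q0)).2 ∈ M.QF

/-- A set of patterns is `G`-recursively enumerable if some `G`-machine accepts exactly its
elements. -/
def GRecEnum {k : ℕ} (S : Fin k → G) {A : Type} (L : Set (Pattern G A)) : Prop :=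
  ∃ M : GMachine k A, ∀ p : Pattern G A, M.Accepts S p ↔ p ∈ L

/-- The consistent pattern coding `c` defines the pattern `p`. -/
def Defines {k : ℕ} (S : Fin k → G) {A : Type} (c : PatternCoding k A)
    (p : Pattern G A) : Prop :=
  (∀ g : G, g ∈ p.supp ↔ ∃ q ∈ c, wordEval S q.1 = g) ∧
  ∀ q ∈ c, ∀ hg : wordEval S q.1 ∈ p.supp, p.val (wordEval S q.1) hg = q.2

/-- `p(C)`: the set of patterns defined by the consistent pattern codings of `C`. -/
def patternsOf {k : ℕ} (S : Fin k → G) {A : Type} (C : Set (PatternCoding k A)) :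
    Set (Pattern G A) :=
  {p | ∃ c ∈ C, Consistent S c ∧ Defines S c p}

/-- A set of patterns is closed by extensions if any pattern extending a pattern of the set
also belongs to the set. -/
def ClosedByExtensions {A : Type} (L : Set (Pattern G A)) : Prop :=
  ∀ (p₁ p₂ : Pattern G A) (hsub : p₁.supp ⊆ p₂.supp),
    (∀ (g : G) (hg : g ∈ p₁.supp), p₂.val g (hsub hg) = p₁.val g hg) →
    p₁ ∈ L → p₂ ∈ L

/-! ### Balls, ends, amenability -/

/-- The ball of radius `n` in the word metric given by `S`. -/
def ballS {k : ℕ} (S : Fin k → G) (n : ℕ) : Set G :=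
  {x | ∃ w : List (Fin k), w.length ≤ n ∧ wordEval S w = x}

/-- Adjacency in the Cayley graph restricted to the set `V`. -/
def Adj {k : ℕ} (S : Fin k → G) (V : Set G) (a b : G) : Prop :=
  a ∈ V ∧ b ∈ V ∧ ∃ i, a * S i = b

/-- Reachability inside `V` in the Cayley graph of `(G,S)`. -/
def Reach {k : ℕ} (S : Fin k → G) (V : Set G) (a b : G) : Prop :=
  Relation.ReflTransGen (Adj S V) a b

/-- `G` has at least two ends: for some `n`, the complement of the ball of radius `n` in the
Cayley graph has at least two infinite connected components. -/
def HasTwoOrMoreEnds {k : ℕ} (S : Fin k → G) : Prop :=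
  ∃ (n : ℕ) (x y : G), x ∉ ballS S n ∧ y ∉ ballS S n ∧
    {z | Reach S (ballS S n)ᶜ x z}.Infinite ∧
    {z | Reach S (ballS S n)ᶜ y z}.Infinite ∧
    ¬ Reach S (ballS S n)ᶜ x y

/-- The Følner condition: `G` is amenable. -/
def FolnerAmenable (G : Type) [Group G] : Prop :=
  ∀ (K : Finset G) (ε : ℝ), 0 < ε →
    ∃ F : Finset G, F.Nonempty ∧ ∀ k ∈ K,
      ((F \ F.image (fun x => x * k)).card : ℝ) < ε * F.card

/-! ### `G × ℤ`, presentations, hardness and the domino problems -/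

/-- Generators of `G × ℤ`: the generators of `G` paired with `0`, together with `(1,±1)`. -/
def prodGens {k : ℕ} (S : Fin k → G) : Fin (k + 2) → G × Multiplicative ℤ :=
  fun i =>
    if h : (i : ℕ) < k then (S ⟨i, h⟩, 1)
    else if (i : ℕ) = k then (1, Multiplicative.ofAdd 1)
    else (1, Multiplicative.ofAdd (-1))

/-- The element of the free group over the generator indices represented by a word. -/
def freeWord {k : ℕ} (w : List (Fin k)) : FreeGroup (Fin k) :=
  (w.map FreeGroup.of).prod

/-- `G` is recursively presented with respect to `S`: there is a recursively enumerable set of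
relators (words over the generators) whose normal closure in the free group over the
generator indices is the kernel of the evaluation map. -/
def RecursivelyPresented {k : ℕ} (S : Fin k → G) : Prop :=
  ∃ R : Set (List (Fin k)), REPred (· ∈ R) ∧
    MonoidHom.ker (FreeGroup.lift S) = Subgroup.normalClosure (freeWord '' R)

/-- `L` is hard for the class of predicates recursively enumerable in the oracle `O`
(equivalently, hard for the halting problem of machines with oracle `O`): every
such predicate many-one reduces to `L` via a computable function. -/
def OracleREHard {α : Type} [Primcodable α] (O : ℕ →. ℕ) (L : Set α) : Prop :=
  ∀ p : ℕ → Prop, RePredIn O p → ∃ f : ℕ → α, Computable f ∧ ∀ n, p n ↔ f n ∈ L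

/-- The domino problem of `(K,T)`: pairs `(N, F)` of an alphabet size and a finite list of
pattern codings over `ℕ` such that no configuration with symbols `< N` avoids `F`. -/
def DP {K : Type} [Group K] {m : ℕ} (T : Fin m → K) : Set (ℕ × List (PatternCoding m ℕ)) :=
  {q | ¬ ∃ x : K → ℕ, (∀ g, x g < q.1) ∧ x ∈ XC T {c | c ∈ q.2}}

/-- The origin constrained domino problem of `(K,T)`: triples `((N,a),F)` such that no
configuration with symbols `< N` and the symbol `a` at the origin avoids `F`. -/
def OCDP {K : Type} [Group K] {m : ℕ} (T : Fin m → K) :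
    Set ((ℕ × ℕ) × List (PatternCoding m ℕ)) :=
  {q | ¬ ∃ x : K → ℕ, (∀ g, x g < q.1.1) ∧ x 1 = q.1.2 ∧ x ∈ XC T {c | c ∈ q.2}}

end SDG

/-!
Forbid, along the `ℤ`-direction of `G × ℤ`, every pattern `blank w₀ ⋯ wₙ₋₁ blank` in which
`w` is a nonempty relator of `G`. Since `w` is a relator of `G` exactly when its image is one of
`G × ℤ`, this set of patterns is enumerable with the word problem of `G × ℤ` as oracle. The
patterns live in `{1} × ℤ`, so the `ℤ`-projective subdynamics is the `ℤ`-subshift forbidding the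
same patterns, and the configuration carrying `w` at `0, …, n-1` and blanks elsewhere leaves it
exactly when `w` is a relator. Leaving an effectively closed `ℤ`-subshift is semi-decidable for a
computable configuration, so an effective presentation of the projective subdynamics would
enumerate the word problem of `G`.
-/

open Encodable

theorem List.filterMap_getElem?_range {α : Type*} (l : List α) :
    (List.range l.length).filterMap (l[·]?) = l := by
  induction l with
  | nil => rfl
  | cons a l ih => simp [List.range_succ_eq_map, List.filterMap_map, ih]

theorem Nat.rfind_const (q : Prop) [Decidable q] :
    Nat.rfind (fun _ => Part.some (decide q)) = Part.assert q fun _ => Part.some 0 := by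
  refine Part.ext fun x => Nat.mem_rfind.trans ?_
  by_cases hq : q <;> simp [hq]
  exact ⟨fun h => Nat.le_zero.1 h, fun h m => h ▸ Nat.zero_le m⟩

theorem REPred.of_exists_bool {α γ : Type*} [Primcodable α] [Primcodable γ]
    {p : α → Prop} (P : α → γ → Bool) (hP : Computable₂ P)
    (h : ∀ a, p a ↔ ∃ c, P a c = true) : REPred p := by
  have hsearch : Computable₂ fun a n =>
      (decode (α := γ) n).bind fun c => bif P a c then some () else none :=
    Computable.option_bind (Computable.decode.comp .snd)
      (Computable.cond (hP.comp (Computable.fst.comp .fst) .snd) (.const _) (.const _)).to₂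
  refine (Partrec.rfindOpt hsearch).dom_re.of_eq fun a => ?_
  rw [Nat.rfindOpt_dom, h]
  constructor
  · rintro ⟨n, u, hu⟩
    simp only [Option.mem_def, Option.bind_eq_some_iff] at hu
    obtain ⟨c, -, hc⟩ := hu
    exact ⟨c, by cases h : P a c <;> simp_all⟩
  · rintro ⟨c, hc⟩
    exact ⟨encode c, (), by simp [hc]⟩

theorem REPred.exists_bool {α : Type*} [Primcodable α] {p : α → Prop} (hp : REPred p) :
    ∃ P : α → ℕ → Bool, Computable₂ P ∧ ∀ a, p a ↔ ∃ n, P a n = true := by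
  obtain ⟨e, he⟩ := Nat.Partrec.Code.exists_code.1 hp
  refine ⟨fun a n => (Nat.Partrec.Code.evaln n e (encode a)).isSome, ?_, fun a => ?_⟩
  · exact (Primrec.option_isSome.comp (Nat.Partrec.Code.primrec_evaln.comp
      (Primrec.pair (Primrec.pair .snd (.const e)) (Primrec.encode.comp .fst)))).to_comp
  · have hdom : p a ↔ (Nat.Partrec.Code.eval e (encode a)).Dom := by
      rw [he]; simp [encodek]
      exact ⟨fun h => ⟨h, trivial⟩, fun h => h.1⟩
    simp only [hdom, Part.dom_iff_mem, Nat.Partrec.Code.evaln_complete, Option.isSome_iff_exists]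
    exact exists_comm

section REPredClosure

variable {α : Type*} [Primcodable α] {p q : α → Prop}

theorem REPred.comp {β : Type*} [Primcodable β] {p : β → Prop} (hp : REPred p) {f : α → β}
    (hf : Computable f) : REPred fun a => p (f a) :=
  Partrec.comp hp hf

theorem REPred.or (hp : REPred p) (hq : REPred q) : REPred fun a => p a ∨ q a := by
  obtain ⟨P, hP, hPp⟩ := hp.exists_bool
  obtain ⟨Q, hQ, hQq⟩ := hq.exists_bool
  refine .of_exists_bool (fun a n => P a n || Q a n) (Primrec.or.to_comp.comp₂ hP hQ)
    fun a => ?_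
  simp [hPp, hQq, exists_or]

theorem REPred.and (hp : REPred p) (hq : REPred q) : REPred fun a => p a ∧ q a := by
  obtain ⟨P, hP, hPp⟩ := hp.exists_bool
  obtain ⟨Q, hQ, hQq⟩ := hq.exists_bool
  refine .of_exists_bool (fun a (mn : ℕ × ℕ) => P a mn.1 && Q a mn.2)
    (Primrec.and.to_comp.comp₂ (hP.comp .fst (Computable.fst.comp .snd))
      (hQ.comp .fst (Computable.snd.comp .snd))) fun a => ?_
  simp [hPp, hQq]

theorem REPred.exists {β : Type*} [Primcodable β] {p : α → β → Prop}
    (hp : REPred fun x : α × β => p x.1 x.2) : REPred fun a => ∃ b, p a b := by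
  obtain ⟨P, hP, hPp⟩ := hp.exists_bool
  refine .of_exists_bool (fun a (bn : β × ℕ) => P (a, bn.1) bn.2)
    (hP.comp₂ (Computable.pair .fst (Computable.fst.comp .snd)) (Computable.snd.comp .snd))
    fun a => ?_
  rw [Prod.exists]
  exact exists_congr fun b => hPp (a, b)

end REPredClosure

namespace Primrec

theorem int_equivNatSumNat : Primrec Equiv.intEquivNatSumNat :=
  encode_iff.1 <| Primrec.encode.of_eq fun z => by cases z <;> rfl

theorem int_equivNatSumNat_symm : Primrec Equiv.intEquivNatSumNat.symm :=
  encode_iff.1 <| Primrec.encode.of_eq fun s => by cases s <;> rfl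

theorem int_toNat : Primrec Int.toNat :=
  (sumCasesOn int_equivNatSumNat (snd.to₂) ((const 0).to₂)).of_eq fun z => by cases z <;> rfl

theorem int_neg_toNat : Primrec fun z : ℤ => (-z).toNat :=
  (sumCasesOn int_equivNatSumNat ((const 0).to₂) ((succ.comp snd).to₂)).of_eq fun z => by
    cases z with
    | ofNat n => show 0 = (-(n : ℤ)).toNat; omega
    | negSucc n => rfl

theorem int_natCast_sub : Primrec₂ fun a b : ℕ => (a : ℤ) - b := by
  have h : Primrec₂ fun a b : ℕ => Equiv.intEquivNatSumNat.symm
      (if b ≤ a then Sum.inl (a - b) else Sum.inr (b - a - 1)) :=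
    int_equivNatSumNat_symm.comp <| Primrec.ite (nat_le.comp snd fst)
      (sumInl.comp (nat_sub.comp fst snd))
      (sumInr.comp (nat_sub.comp (nat_sub.comp snd fst) (const 1)))
  refine h.of_eq fun a b => ?_
  split_ifs with hab
  · simp [Equiv.intEquivNatSumNat, hab]
  · simp [Equiv.intEquivNatSumNat]; omega

theorem int_add : Primrec₂ ((· + ·) : ℤ → ℤ → ℤ) :=
  (int_natCast_sub.comp (nat_add.comp (int_toNat.comp fst) (int_toNat.comp snd))
    (nat_add.comp (int_neg_toNat.comp fst) (int_neg_toNat.comp snd))).to₂.of_eq fun a b => by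
      push_cast; omega

theorem int_nonneg : PrimrecPred fun z : ℤ => 0 ≤ z :=
  (Primrec.eq.comp int_neg_toNat (const 0)).of_eq fun z => by omega

end Primrec

namespace SDG

namespace NatPartrecIn

variable {O : ℕ →. ℕ}

theorem of_natPartrec {f : ℕ →. ℕ} (h : Nat.Partrec f) : NatPartrecIn O f := by
  induction h with
  | zero => exact .zero
  | succ => exact .succ
  | left => exact .left
  | right => exact .right
  | pair _ _ hf hg => exact .pair hf hg
  | comp _ _ hf hg => exact .comp hf hg
  | prec _ _ hf hg => exact .prec hf hg
  | rfind _ hf => exact .rfind hf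

theorem of_primrec {f : ℕ → ℕ} (hf : Primrec f) : NatPartrecIn O ↑f :=
  of_natPartrec (Nat.Partrec.of_primrec (Primrec.nat_iff.1 hf))

theorem of_eq {f g : ℕ →. ℕ} (hf : NatPartrecIn O f) (H : ∀ n, f n = g n) : NatPartrecIn O g :=
  funext H ▸ hf

end NatPartrecIn

theorem rePredIn_of_eq_zero {O : ℕ →. ℕ} {α : Type} [Primcodable α] {t : ℕ → ℕ}
    (ht : NatPartrecIn O ↑t) {v : α → ℕ} (hv : Computable v) {p : α → Prop}
    (hp : ∀ a, p a ↔ t (v a) = 0) : RePredIn O p := by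
  have hleft : NatPartrecIn O fun r => Part.some (t r.unpair.1) :=
    (ht.comp .left).of_eq fun r => Part.bind_some _ _
  have hzero : NatPartrecIn O fun m => Part.assert (t m = 0) fun _ => Part.some 0 :=
    (NatPartrecIn.rfind hleft).of_eq fun m => by simp [Nat.rfind_const]
  have hv' : NatPartrecIn O fun n => ((decode (α := α) n).map v : Part ℕ) :=
    (NatPartrecIn.of_natPartrec hv).of_eq fun n => by cases decode (α := α) n <;> simp
  refine (hzero.comp hv').of_eq fun n => ?_
  cases decode (α := α) n with
  | none => simp
  | some a => exact Part.ext fun x => by simp [hp, Unique.exists_iff, encode_star, eq_comm]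

theorem rePredIn_charFun_of_manyOneReducible {α β : Type} [Primcodable α] [Primcodable β]
    {p : α → Prop} {L : Set β} (h : p ≤₀ (· ∈ L)) : RePredIn (charFun L) p := by
  obtain ⟨f, hf, hpf⟩ := h
  refine rePredIn_of_eq_zero (t := fun n => 1 - if ∃ b ∈ L, encode b = n then 1 else 0)
    ((NatPartrecIn.comp (NatPartrecIn.of_primrec (Primrec.nat_sub.comp (.const 1) .id))
      .oracle).of_eq fun n => Part.bind_some _ _) (Computable.encode.comp hf) fun a => ?_
  by_cases h : f a ∈ L <;> simp [hpf a, h]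

variable {G : Type} [Group G]

@[simp] theorem wordEval_nil {k : ℕ} (S : Fin k → G) : wordEval S [] = 1 := rfl

@[simp] theorem wordEval_cons {k : ℕ} (S : Fin k → G) (i : Fin k) (w : List (Fin k)) :
    wordEval S (i :: w) = S i * wordEval S w := List.prod_cons

@[simp] theorem wordEval_replicate {k : ℕ} (S : Fin k → G) (n : ℕ) (i : Fin k) :
    wordEval S (List.replicate n i) = S i ^ n := by
  simp [wordEval, List.map_replicate, List.prod_replicate]

theorem wordEval_map {H : Type} [Group H] (φ : G →* H) {k : ℕ} (S : Fin k → G)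
    (w : List (Fin k)) : wordEval (fun i => φ (S i)) w = φ (wordEval S w) := by
  simp [wordEval, map_list_prod, List.map_map, Function.comp_def]

theorem XC_prod_projection {H A : Type} [Group H] {n : ℕ} (U : Fin n → G × H)
    {C : Set (PatternCoding n A)} (hC : ∀ c ∈ C, ∀ p ∈ c, (wordEval U p.1).1 = 1) :
    {x : H → A | ∃ y ∈ XC U C, ∀ h, x h = y (1, h)} = XC (fun i => (U i).2) C := by
  have hsnd : ∀ u, wordEval (fun i => (U i).2) u = (wordEval U u).2 :=
    wordEval_map (MonoidHom.snd G H) U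
  ext x
  constructor
  · rintro ⟨y, hy, hxy⟩ ⟨h, c, hc, hocc⟩
    refine hy ⟨(1, h), c, hc, fun p hp => ?_⟩
    rw [← hocc p hp, hxy, hsnd]
    congr 1
    ext
    · simp [hC c hc p hp]
    · simp
  · intro hx
    refine ⟨fun g => x g.2, fun ⟨g, c, hc, hocc⟩ => hx ⟨g.2, c, hc, fun p hp => ?_⟩,
      fun _ => rfl⟩
    rw [hsnd, ← hocc p hp]
    rfl

open Multiplicative

theorem primrec_toAdd_wordEval {m : ℕ} (T : Fin m → Multiplicative ℤ) :
    Primrec fun u : List (Fin m) => toAdd (wordEval T u) :=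
  (Primrec.list_foldr .id (.const 0) (Primrec.int_add.comp
    ((Primrec.dom_finite fun i => toAdd (T i)).comp (Primrec.fst.comp .snd))
    (Primrec.snd.comp .snd)).to₂).of_eq fun u => by
      induction u with
      | nil => rfl
      | cons i u ih => simp_all

theorem rePred_not_mem_XC {α A : Type} [Primcodable α] [Primcodable A] {m : ℕ}
    (T : Fin m → Multiplicative ℤ) {C : Set (PatternCoding m A)} (hC : REPred (· ∈ C))
    {x : α → Multiplicative ℤ → A} (hx : Primrec₂ fun a (z : ℤ) => x a (ofAdd z)) :
    REPred fun a => x a ∉ XC T C := by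
  have hmatch : PrimrecPred fun y : (α × ℤ) × PatternCoding m A =>
      y.2.map (fun p => x y.1.1 (ofAdd (y.1.2 + toAdd (wordEval T p.1)))) = y.2.map Prod.snd :=
    Primrec.eq.comp
      (Primrec.list_map .snd (hx.comp (Primrec.fst.comp (Primrec.fst.comp .fst))
        (Primrec.int_add.comp (Primrec.snd.comp (Primrec.fst.comp .fst))
          ((primrec_toAdd_wordEval T).comp (Primrec.fst.comp .snd)))).to₂)
      (Primrec.list_map .snd (Primrec.snd.comp .snd).to₂)
  have hocc : REPred fun y : (α × ℤ) × PatternCoding m A => y.2 ∈ C ∧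
      y.2.map (fun p => x y.1.1 (ofAdd (y.1.2 + toAdd (wordEval T p.1)))) = y.2.map Prod.snd :=
    (hC.comp Computable.snd).and hmatch.computablePred.to_re
  have hexists : REPred fun a => ∃ z : ℤ, ∃ c, c ∈ C ∧
      c.map (fun p => x a (ofAdd (z + toAdd (wordEval T p.1)))) = c.map Prod.snd :=
    REPred.exists (REPred.exists hocc)
  refine hexists.of_eq fun a => ?_
  simp only [XC, Set.mem_ofPred_eq, not_not, List.map_inj_left, ofAdd_add, ofAdd_toAdd]
  exact (ofAdd.surjective.exists
    (p := fun g => ∃ c ∈ C, ∀ p ∈ c, x a (g * wordEval T p.1) = p.2)).symm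

section Construction

variable {k : ℕ} (S : Fin k → G)

def stepUp (k : ℕ) : Fin (k + 2) := ⟨k, by omega⟩

def stepDown (k : ℕ) : Fin (k + 2) := ⟨k + 1, by omega⟩

@[simp] theorem prodGens_stepUp : prodGens S (stepUp k) = (1, ofAdd 1) := by
  simp [prodGens, stepUp]

@[simp] theorem prodGens_stepDown : prodGens S (stepDown k) = (1, ofAdd (-1)) := by
  simp [prodGens, stepDown]

@[simp] theorem prodGens_castAdd (i : Fin k) : prodGens S (Fin.castAdd 2 i) = (S i, 1) := by
  simp [prodGens]

theorem wordEval_prodGens_map_castAdd (w : List (Fin k)) :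
    wordEval (prodGens S) (w.map (Fin.castAdd 2)) = (wordEval S w, 1) := by
  induction w with
  | nil => rfl
  | cons i w ih => simp [ih]

theorem map_castAdd_mem_WP_prodGens_iff {w : List (Fin k)} :
    w.map (Fin.castAdd 2) ∈ WP (prodGens S) ↔ w ∈ WP S := by
  simp [WP, wordEval_prodGens_map_castAdd, Prod.mk_eq_one]

/-- The pattern `blank w₀ ⋯ wₙ₋₁ blank` laid out along the `ℤ`-direction, `none` being the
blank. -/
def wordCoding (w : List (Fin k)) : PatternCoding (k + 2) (Option (Fin k)) :=
  ([stepDown k], none) :: (List.replicate w.length (stepUp k), none) ::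
    (List.range w.length).map fun j => (List.replicate j (stepUp k), w[j]?)

def wordCodings : Set (PatternCoding (k + 2) (Option (Fin k))) :=
  wordCoding '' {w | w ∈ WP S ∧ w ≠ []}

theorem fst_wordEval_of_mem_wordCoding {w : List (Fin k)} {p} (hp : p ∈ wordCoding w) :
    (wordEval (prodGens S) p.1).1 = 1 := by
  simp only [wordCoding, List.mem_cons, List.mem_map, List.mem_range] at hp
  rcases hp with rfl | rfl | ⟨j, -, rfl⟩ <;> simp

theorem wordCoding_occurs_iff {w : List (Fin k)} {x : Multiplicative ℤ → Option (Fin k)}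
    {g : Multiplicative ℤ} :
    (∀ p ∈ wordCoding w, x (g * wordEval (fun i => (prodGens S i).2) p.1) = p.2) ↔
      x (g * ofAdd (-1)) = none ∧ x (g * ofAdd (w.length : ℤ)) = none ∧
        ∀ j < w.length, x (g * ofAdd (j : ℤ)) = w[j]? := by
  simp [wordCoding, ← ofAdd_nsmul]

def wordConfig (w : List (Fin k)) : Multiplicative ℤ → Option (Fin k) :=
  fun g => if 0 ≤ toAdd g then w[(toAdd g).toNat]? else none

theorem primrec_wordConfig :
    Primrec₂ fun (w : List (Fin k)) (z : ℤ) => wordConfig w (ofAdd z) :=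
  Primrec.ite (Primrec.int_nonneg.comp .snd)
    (Primrec.list_getElem?.comp .fst (Primrec.int_toNat.comp .snd)) (.const none)

theorem isSome_wordConfig_ofAdd_iff {w : List (Fin k)} {z : ℤ} :
    (wordConfig w (ofAdd z)).isSome ↔ 0 ≤ z ∧ z < w.length := by
  simp only [wordConfig, toAdd_ofAdd]
  split_ifs with hz <;> simp [hz]

@[simp] theorem wordConfig_ofAdd_natCast (w : List (Fin k)) (j : ℕ) :
    wordConfig w (ofAdd (j : ℤ)) = w[j]? := by
  simp [wordConfig]

theorem eq_of_wordCoding_occurs_wordConfig {w w' : List (Fin k)} (hw' : w' ≠ [])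
    {g : Multiplicative ℤ}
    (hocc : ∀ p ∈ wordCoding w',
      wordConfig w (g * wordEval (fun i => (prodGens S i).2) p.1) = p.2) :
    g = 1 ∧ w' = w := by
  obtain ⟨hleft, hright, hletters⟩ := (wordCoding_occurs_iff S).1 hocc
  obtain ⟨a, ha⟩ : ∃ a, w'[0]? = some a :=
    ⟨_, List.getElem?_eq_getElem (List.length_pos_iff.2 hw')⟩
  -- the letter `w'₀` lies in `[0, |w|)` and the blank just before it does not, so `g = 1`
  have hg : g = 1 := by
    have h0 := hletters 0 (List.length_pos_iff.2 hw')
    rw [← ofAdd_toAdd g, ← ofAdd_add] at h0 hleft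
    have hin := isSome_wordConfig_ofAdd_iff.1 (by rw [h0, ha]; rfl)
    have hout : ¬(0 ≤ toAdd g + -1 ∧ toAdd g + -1 < w.length) := by
      rw [← isSome_wordConfig_ofAdd_iff, hleft]
      exact Bool.false_ne_true
    rw [← ofAdd_toAdd g, ofAdd_eq_one]
    omega
  subst hg
  simp only [one_mul, wordConfig_ofAdd_natCast] at hright hletters
  have hlen : w.length ≤ w'.length := List.getElem?_eq_none_iff.1 hright
  refine ⟨rfl, List.ext_getElem? fun j => ?_⟩
  by_cases hj : j < w'.length
  · exact (hletters j hj).symm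
  · rw [List.getElem?_eq_none (by omega), List.getElem?_eq_none (by omega)]

theorem wordConfig_not_mem_XC_iff {w : List (Fin k)} (hw : w ≠ []) :
    wordConfig w ∉ XC (fun i => (prodGens S i).2) (wordCodings S) ↔ w ∈ WP S := by
  simp only [XC, Set.mem_ofPred_eq, not_not]
  constructor
  · rintro ⟨g, _, ⟨w', ⟨hw'WP, hw'⟩, rfl⟩, hocc⟩
    exact (eq_of_wordCoding_occurs_wordConfig S hw' hocc).2 ▸ hw'WP
  · intro hwWP
    exact ⟨1, _, ⟨w, ⟨hwWP, hw⟩, rfl⟩, (wordCoding_occurs_iff S).2 (by simp [wordConfig])⟩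

theorem filterMap_snd_wordCoding (w : List (Fin k)) :
    (wordCoding w).filterMap Prod.snd = w := by
  simp [wordCoding, List.filterMap_map, List.filterMap_getElem?_range]

theorem primrec_wordCoding : Primrec (wordCoding : List (Fin k) → _) := by
  have hrep : Primrec fun n : ℕ => List.replicate n (stepUp k) :=
    (Primrec.list_map Primrec.list_range (Primrec₂.const (stepUp k))).of_eq fun n => by
      simp [List.map_const']
  exact Primrec.list_cons.comp (.const _) (Primrec.list_cons.comp
    (Primrec.pair (hrep.comp Primrec.list_length) (.const none))
    (Primrec.list_map (Primrec.list_range.comp Primrec.list_length)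
      (Primrec.pair (hrep.comp .snd) (Primrec.list_getElem?.comp .fst .snd)).to₂))

theorem rePredIn_wordCodings :
    RePredIn (charFun (WP (prodGens S))) (· ∈ wordCodings S) := by
  let decodeWord : PatternCoding (k + 2) (Option (Fin k)) → List (Fin k) :=
    fun c => c.filterMap Prod.snd
  have hdecode : Primrec decodeWord := Primrec.listFilterMap .id (Primrec.snd.comp .snd).to₂
  let IsWordCoding c := wordCoding (decodeWord c) = c ∧ decodeWord c ≠ []
  have hIsWordCoding : PrimrecPred IsWordCoding :=
    (Primrec.eq.comp (primrec_wordCoding.comp hdecode) .id).and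
      (Primrec.eq.comp hdecode (.const [])).not
  -- a coding that encodes no word is sent to the non-relator `[stepUp k]`
  refine rePredIn_charFun_of_manyOneReducible ⟨fun c => if IsWordCoding c then
    (decodeWord c).map (Fin.castAdd 2) else [stepUp k], ?_, fun c => ?_⟩
  · exact (Primrec.ite hIsWordCoding (Primrec.list_map hdecode
      ((Primrec.dom_finite (Fin.castAdd 2)).comp .snd).to₂) (.const _)).to_comp
  simp only [wordCodings, Set.mem_image, Set.mem_ofPred_eq]
  by_cases hc : IsWordCoding c
  · rw [if_pos hc, map_castAdd_mem_WP_prodGens_iff]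
    constructor
    · rintro ⟨w, ⟨hw, -⟩, rfl⟩
      simpa [decodeWord, filterMap_snd_wordCoding] using hw
    · exact fun h => ⟨decodeWord c, ⟨h, hc.2⟩, hc.1⟩
  · rw [if_neg hc]
    constructor
    · rintro ⟨w, ⟨-, hw⟩, rfl⟩
      exact absurd ⟨by simp [decodeWord, filterMap_snd_wordCoding], by simpa [decodeWord,
        filterMap_snd_wordCoding] using hw⟩ hc
    · simp [WP]

theorem rePred_WP_of_effectivelyClosed {m : ℕ} (T : Fin m → Multiplicative ℤ)
    (h : EffectivelyClosed T (XC (fun i => (prodGens S i).2) (wordCodings S))) :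
    REPred (· ∈ WP S) := by
  obtain ⟨C, hC, hXC⟩ := h
  have hnil : ComputablePred fun w : List (Fin k) => w = [] :=
    (Primrec.eq.comp .id (.const [])).computablePred
  refine (hnil.to_re.or (rePred_not_mem_XC T hC primrec_wordConfig)).of_eq fun w => ?_
  rw [← hXC]
  by_cases hw : w = []
  · simp [hw, WP]
  · simp [hw, wordConfig_not_mem_XC_iff S hw]

end Construction

theorem projective_subdynamics_not_effective_general
    {G : Type} [Group G] {k : ℕ} (S : Fin k → G)
    (hWP : ¬ REPred (· ∈ WP S)) :
    ∃ (A : Type) (fA : Fintype A) (pA : Primcodable A)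
      (X : Set ((G × Multiplicative ℤ) → A)),
      @GEffectivelyClosed (G × Multiplicative ℤ) _ (k + 2) (prodGens S) A pA X ∧
      ∀ (m : ℕ) (T : Fin m → Multiplicative ℤ), IsGenData T →
        ¬ @EffectivelyClosed (Multiplicative ℤ) _ m T A pA
            {x : Multiplicative ℤ → A | ∃ y ∈ X, ∀ n : Multiplicative ℤ, x n = y (1, n)} := by
  refine ⟨Option (Fin k), inferInstance, inferInstance, XC (prodGens S) (wordCodings S),
    ⟨_, rePredIn_wordCodings S, rfl⟩, fun m T _ hT => hWP ?_⟩
  rw [XC_prod_projection (prodGens S) ?_] at hT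
  · exact rePred_WP_of_effectivelyClosed S T hT
  · rintro _ ⟨w, -, rfl⟩ p hp
    exact fst_wordEval_of_mem_wordCoding S hp

/-- If the word problem of `G` is not recursively enumerable, then there is a
`(G×ℤ)`-effectively closed subshift whose `ℤ`-projective subdynamics is not effectively
closed. -/
theorem projective_subdynamics_not_effective
    {G : Type} [Group G] {k : ℕ} (S : Fin k → G) (hS : IsGenData S)
    (hWP : ¬ REPred (· ∈ WP S)) :
    ∃ (A : Type) (fA : Fintype A) (pA : Primcodable A)
      (X : Set ((G × Multiplicative ℤ) → A)),
      @GEffectivelyClosed (G × Multiplicative ℤ) _ (k + 2) (prodGens S) A pA X ∧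
      ∀ (m : ℕ) (T : Fin m → Multiplicative ℤ), IsGenData T →
        ¬ @EffectivelyClosed (Multiplicative ℤ) _ m T A pA
            {x : Multiplicative ℤ → A | ∃ y ∈ X, ∀ n : Multiplicative ℤ, x n = y (1, n)} :=
  projective_subdynamics_not_effective_general S hWP

end SDG
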